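/- Green tree formula: for a Markov chain X with stochastic matrix P on finite S, subset R with w(R) > 0, and i, j ∈ S \ R, the expected number of visits to j before hitting R satisfies E_i[ Σ_{n=0}^{T_R − 1} 1(X_n = j) ] = w_{ij}(R ∪ {j}) / w(R). -/

import Mathlib

open Finset

/-- A spanning forest of `S` with root set `R`, encoded as a successor function:
roots are fixed points, and every state eventually reaches `R` under iteration. -/
def IsForest {S : Type*} [Fintype S] [DecidableEq S] (R : Finset S) (f : S → S) : Prop :=
  (∀ i ∈ R, f i = i) ∧ ∀ i : S, ∃ n : ℕ, f^[n] i ∈ R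

/-- The `P`-weight of a forest: product of transition probabilities over its directed edges. -/
noncomputable def forestWt {S : Type*} [Fintype S] [DecidableEq S]
    (p : S → S → ℝ) (R : Finset S) (f : S → S) : ℝ :=
  ∏ i ∈ Rᶜ, p i (f i)

open Classical in
/-- `w p R`: the total `P`-weight of spanning forests with root set `R`. -/
noncomputable def w {S : Type*} [Fintype S] [DecidableEq S]
    (p : S → S → ℝ) (R : Finset S) : ℝ :=
  ∑ f : S → S, if IsForest R f then forestWt p R f else 0

open Classical in
/-- `wroot p A i j`: total weight of forests with root set `A` in which the tree
containing `i` has root `j`. -/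
noncomputable def wroot {S : Type*} [Fintype S] [DecidableEq S]
    (p : S → S → ℝ) (A : Finset S) (i j : S) : ℝ :=
  ∑ f : S → S, if IsForest A f ∧ ∃ n : ℕ, f^[n] i = j then forestWt p A f else 0

/-- `p` is a stochastic matrix. -/
def IsStochastic {S : Type*} [Fintype S] (p : S → S → ℝ) : Prop :=
  (∀ i j, 0 ≤ p i j) ∧ ∀ i, ∑ j, p i j = 1

/-- `p` is irreducible. -/
def PIrreducible {S : Type*} [Fintype S] [DecidableEq S] (p : S → S → ℝ) : Prop :=
  ∀ i j : S, ∃ n : ℕ, 0 < ((Matrix.of p) ^ n) i j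

/-- Weight of a path starting at `i` with successive states given by the list. -/
def wt {S : Type*} (p : S → S → ℝ) : S → List S → ℝ
  | _, [] => 1
  | i, j :: l => p i j * wt p j l

open Classical in
/-- `green p R i j`: expected number of visits to `j` strictly before hitting `R`, started at `i`;
a sum of weights of paths from `i` to `j` avoiding `R`. -/
noncomputable def green {S : Type*} [Fintype S] [DecidableEq S]
    (p : S → S → ℝ) (R : Finset S) (i j : S) : ℝ :=
  ∑' l : {l : List S // (∀ x ∈ l, x ∉ R) ∧ (i :: l).getLast (List.cons_ne_nil i l) = j},
    wt p i l.1

/-!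
Let `Q` be `P` with every transition into `R` deleted; summing over paths by length,
`green p R i j = ∑ₙ (Qⁿ)ᵢⱼ`. Put `v k = w_{ik}(R ∪ {k})` for `k ∉ R` and `v = 0` on `R`.
Summing over the edge out of `j` (whose weights add up to `1`) turns `w_{ij}(R ∪ {j})` into a sum
of `∏_{x ∉ R} p x (h x)` over functions `h`; such an `h` is either a forest with root set `R` and
`i = j`, or it has a unique `k ∉ R` with `h k = j` such that cutting the edge out of `k` leaves
`i` in the tree of `k`. This is the identity `v = w(R) δᵢ + v Q`. Iterating it,
`v = w(R) δᵢ ∑_{n<M} Qⁿ + v Qᴹ` with every term nonnegative, so the partial sums of `∑ Qⁿ` are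
bounded, `Qᴹ → 0`, and `v j = w(R) ∑ₙ (Qⁿ)ᵢⱼ`.
-/

open Matrix Filter Topology

section Iterate

variable {α : Type*}

theorem iterate_eq_iterate_of_forall_lt {f g : α → α} {B : α → Prop}
    (hfg : ∀ z, ¬ B z → f z = g z) {n : ℕ} {x : α} (hx : ∀ m < n, ¬ B (f^[m] x)) :
    f^[n] x = g^[n] x := by
  induction n generalizing x with
  | zero => rfl
  | succ n ih =>
    have hx0 : f x = g x := hfg x (hx 0 n.succ_pos)
    rw [Function.iterate_succ_apply, Function.iterate_succ_apply, ← hx0]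
    exact ih fun m hm => by simpa using hx (m + 1) (by omega)

theorem exists_iterate_iff_of_eq_off {f g : α → α} {B : α → Prop}
    (hfg : ∀ z, ¬ B z → f z = g z) (x : α) :
    (∃ n, B (f^[n] x)) ↔ ∃ n, B (g^[n] x) := by
  classical
  have key : ∀ f g : α → α, (∀ z, ¬ B z → f z = g z) → (∃ n, B (f^[n] x)) →
      ∃ n, B (g^[n] x) := fun f g hfg hf =>
    ⟨Nat.find hf, iterate_eq_iterate_of_forall_lt hfg (fun m hm => Nat.find_min hf hm) ▸
      Nat.find_spec hf⟩
  exact ⟨key f g hfg, key g f fun z hz => (hfg z hz).symm⟩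

theorem exists_iterate_update_iff {B : α → Prop} [DecidableEq α] {a : α} (ha : B a) (h : α → α)
    (b x : α) : (∃ n, B ((Function.update h a b)^[n] x)) ↔ ∃ n, B (h^[n] x) :=
  exists_iterate_iff_of_eq_off
    (fun z hz => Function.update_of_ne (fun e : z = a => hz (e ▸ ha)) b h) x

theorem iterate_notMem_of_periodic {h : α → α} {R : Set α} (hfix : ∀ r ∈ R, h r = r) {x : α}
    (hx : x ∉ R) {d : ℕ} (hd : 0 < d) (hper : h^[d] x = x) (n : ℕ) : h^[n] x ∉ R := by
  intro hn
  have hback : h^[d * (n + 1) - n] (h^[n] x) = x := by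
    rw [← Function.iterate_add_apply, Nat.sub_add_cancel (by nlinarith), Function.iterate_mul]
    exact Function.iterate_fixed hper _
  have hxn : x = h^[n] x := hback.symm.trans (Function.iterate_fixed (hfix _ hn) _)
  exact hx (hxn ▸ hn)

theorem iterate_sub_eq_self {h : α → α} {i j : α} {m n : ℕ} (hm : h^[m] i = j) (hn : h^[n] i = j)
    (hmn : m < n) : h^[n - m] j = j := by
  rw [← hm, ← Function.iterate_add_apply, Nat.sub_add_cancel hmn.le, hn, hm]

end Iterate

section Trees

variable {S : Type*} [DecidableEq S] {R : Finset S} {h : S → S}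

/-- Cutting the edge out of `a` turns `h` into a forest with root set `insert a R` in which `i`
lies in the tree of `a` (see `isForest_update_and_reaches_iff`). -/
def InTreeOf (R : Finset S) (a i : S) (h : S → S) : Prop :=
  (∀ r ∈ R, h r = r) ∧ (∀ x, ∃ n, h^[n] x ∈ insert a R) ∧ ∃ n, h^[n] i = a

theorem isForest_update_and_reaches_iff [Fintype S] {a : S} (ha : a ∉ R) (i : S) :
    (IsForest (insert a R) (Function.update h a a) ∧
      ∃ n, (Function.update h a a)^[n] i = a) ↔ InTreeOf R a i h := by
  have hfix : (∀ r ∈ R, Function.update h a a r = r) ↔ ∀ r ∈ R, h r = r :=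
    forall₂_congr fun r hr => by rw [Function.update_of_ne (ne_of_mem_of_not_mem hr ha)]
  simp only [IsForest, InTreeOf, Finset.forall_mem_insert, Function.update_self, true_and, hfix,
    and_assoc,
    exists_iterate_update_iff (B := (· ∈ insert a R)) (Finset.mem_insert_self a R),
    exists_iterate_update_iff (B := (· = a)) rfl]

theorem exists_iterate_mem_of_insert {j x : S} {B : Finset S} (hRB : R ⊆ B)
    (hx : ∃ n, h^[n] x ∈ insert j R) (hj : ∃ m, h^[m] j ∈ B) : ∃ n, h^[n] x ∈ B := by
  obtain ⟨n, hn⟩ := hx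
  rcases Finset.mem_insert.1 hn with hnj | hnR
  · obtain ⟨m, hm⟩ := hj
    exact ⟨m + n, by rwa [Function.iterate_add_apply, hnj]⟩
  · exact ⟨n, hRB hnR⟩

theorem inTreeOf_self_of_isForest [Fintype S] (hF : IsForest R h) (i : S) : InTreeOf R i i h :=
  ⟨hF.1, fun x => (hF.2 x).imp fun _ => Finset.mem_insert_of_mem, 0, rfl⟩

theorem InTreeOf.of_apply_eq {i j k : S} (hk : h k = j) (hT : InTreeOf R k i h) :
    InTreeOf R j i h := by
  obtain ⟨hfix, hreach, n, hn⟩ := hT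
  refine ⟨hfix, fun x => exists_iterate_mem_of_insert (Finset.subset_insert j R) (hreach x)
    ⟨1, by simp [hk]⟩, n + 1, by rw [Function.iterate_succ_apply', hn, hk]⟩

theorem not_inTreeOf_of_isForest [Fintype S] {i k : S} (hi : i ∉ R) (hF : IsForest R h)
    (hk : h k = i) : ¬ InTreeOf R k i h := by
  rintro ⟨-, -, n, hn⟩
  obtain ⟨m, hm⟩ := hF.2 i
  exact iterate_notMem_of_periodic hF.1 hi n.succ_pos
    (by rw [Function.iterate_succ_apply', hn, hk]) m hm

theorem InTreeOf.exists_iterate_eq_of_periodic {i j k : S} (hT : InTreeOf R k i h) (hj : j ∉ R)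
    {d : ℕ} (hd : 0 < d) (hper : h^[d] j = j) : ∃ a, h^[a] j = k := by
  obtain ⟨hfix, hreach, -⟩ := hT
  obtain ⟨m, hm⟩ := hreach j
  rcases Finset.mem_insert.1 hm with hmk | hmR
  · exact ⟨m, hmk⟩
  · exact absurd hmR (iterate_notMem_of_periodic hfix hj hd hper m)

/-- Both `k₁` and `k₂` lie on the cycle through `j` and precede `j` on it. -/
theorem eq_of_inTreeOf_of_periodic {i j k₁ k₂ : S} (hj : j ∉ R) {d : ℕ} (hd : 0 < d)
    (hper : h^[d] j = j) (hk₁ : h k₁ = j) (hk₂ : h k₂ = j) (hT₁ : InTreeOf R k₁ i h)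
    (hT₂ : InTreeOf R k₂ i h) : k₁ = k₂ := by
  obtain ⟨a, ha⟩ := hT₁.exists_iterate_eq_of_periodic hj hd hper
  obtain ⟨b, hb⟩ := hT₂.exists_iterate_eq_of_periodic hj hd hper
  have hret : ∀ {c k}, h^[c] j = k → h k = j → h^[c + 1] j = j := fun hc hk => by
    rw [Function.iterate_succ_apply', hc, hk]
  calc k₁ = h^[a] (h^[b + 1] j) := by rw [hret hb hk₂, ha]
    _ = h^[b] (h^[a + 1] j) := by
      rw [← Function.iterate_add_apply, ← Function.iterate_add_apply,
        show a + (b + 1) = b + (a + 1) by omega]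
    _ = k₂ := by rw [hret ha hk₁, hb]

theorem InTreeOf.eq_of_apply_eq {i j k₁ k₂ : S} (hj : j ∉ R) (hk₁ : h k₁ = j) (hk₂ : h k₂ = j)
    (hT₁ : InTreeOf R k₁ i h) (hT₂ : InTreeOf R k₂ i h) : k₁ = k₂ := by
  obtain ⟨n₁, hn₁⟩ := hT₁.2.2
  obtain ⟨n₂, hn₂⟩ := hT₂.2.2
  have hj₁ : h^[n₁ + 1] i = j := by rw [Function.iterate_succ_apply', hn₁, hk₁]
  have hj₂ : h^[n₂ + 1] i = j := by rw [Function.iterate_succ_apply', hn₂, hk₂]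
  rcases lt_trichotomy n₁ n₂ with hlt | rfl | hgt
  · exact eq_of_inTreeOf_of_periodic hj (by omega)
      (iterate_sub_eq_self hj₁ hj₂ (by omega)) hk₁ hk₂ hT₁ hT₂
  · rw [← hn₁, hn₂]
  · exact eq_of_inTreeOf_of_periodic hj (by omega)
      (iterate_sub_eq_self hj₂ hj₁ (by omega)) hk₁ hk₂ hT₁ hT₂

/-- The predecessor `k` of `j` is the one on the cycle through `j` if there is such a cycle, and
otherwise the vertex visited just before `j` on the way from `i`. -/
theorem InTreeOf.exists_apply_eq [Fintype S] {i j : S} (hT : InTreeOf R j i h)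
    (hnot : ¬ (i = j ∧ IsForest R h)) : ∃ k, h k = j ∧ InTreeOf R k i h := by
  obtain ⟨hfix, hreach, n, hn⟩ := hT
  by_cases hcyc : ∃ d, 0 < d ∧ h^[d] j = j
  · obtain ⟨d, hd, hper⟩ := hcyc
    refine ⟨h^[d - 1] j, ?_, hfix, fun x => exists_iterate_mem_of_insert
      (Finset.subset_insert _ R) (hreach x) ⟨d - 1, Finset.mem_insert_self _ R⟩,
      d - 1 + n, by rw [Function.iterate_add_apply, hn]⟩
    rw [← Function.iterate_succ_apply' h (d - 1), Nat.succ_eq_add_one, Nat.sub_add_cancel hd, hper]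
  · push Not at hcyc
    have hjR : ∃ m, h^[m] j ∈ R := by
      obtain ⟨m, hm⟩ := hreach (h j)
      rw [← Function.iterate_succ_apply] at hm
      exact ⟨m + 1, (Finset.mem_insert.1 hm).resolve_left (hcyc _ m.succ_pos)⟩
    have hF : IsForest R h :=
      ⟨hfix, fun x => exists_iterate_mem_of_insert subset_rfl (hreach x) hjR⟩
    have hn0 : n ≠ 0 := by
      rintro rfl
      exact hnot ⟨hn, hF⟩
    refine ⟨h^[n - 1] i, ?_, hfix, fun x => (hF.2 x).imp fun _ => Finset.mem_insert_of_mem,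
      n - 1, rfl⟩
    rw [← Function.iterate_succ_apply' h (n - 1), Nat.succ_eq_add_one,
      Nat.sub_add_cancel (Nat.pos_of_ne_zero hn0), hn]

open Classical in
theorem ite_inTreeOf_eq_add [Fintype S] {M : Type*} [AddCommMonoid M] {i j : S} (hj : j ∉ R)
    (x : M) : (if InTreeOf R j i h then x else 0) = (if i = j ∧ IsForest R h then x else 0) +
      ∑ k ∈ Rᶜ, if h k = j ∧ InTreeOf R k i h then x else 0 := by
  by_cases hT : InTreeOf R j i h
  · by_cases hF : i = j ∧ IsForest R h
    · obtain ⟨rfl, hF⟩ := hF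
      rw [if_pos hT, if_pos ⟨rfl, hF⟩, Finset.sum_eq_zero, add_zero]
      exact fun k _ => if_neg fun hk => not_inTreeOf_of_isForest hj hF hk.1 hk.2
    · obtain ⟨k, hk, hkT⟩ := hT.exists_apply_eq hF
      have hkR : k ∉ R := fun hkR => hj (by rw [← hk, hT.1 k hkR]; exact hkR)
      rw [if_pos hT, if_neg hF, zero_add, Finset.sum_eq_single_of_mem k (Finset.mem_compl.2 hkR),
        if_pos ⟨hk, hkT⟩]
      exact fun k' _ hk' => if_neg fun h' => hk' (h'.2.eq_of_apply_eq hj h'.1 hk hkT)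
  · rw [if_neg hT, if_neg, Finset.sum_eq_zero, add_zero]
    · exact fun k _ => if_neg fun hk => hT (hk.2.of_apply_eq hk.1)
    · rintro ⟨rfl, hF⟩
      exact hT (inTreeOf_self_of_isForest hF i)

end Trees

theorem Fintype.sum_update_apply {α β M : Type*} [Fintype α] [DecidableEq α] [Fintype β]
    [DecidableEq β] [AddCommMonoid M] (a : α) (b : β) (Ψ : (α → β) → β → M) :
    ∑ h, Ψ (Function.update h a b) (h a) = ∑ f, ∑ m, if f a = b then Ψ f m else 0 := by
  have hσ : Function.Involutive fun q : (α → β) × β => (Function.update q.1 a q.2, q.1 a) := by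
    rintro ⟨f, m⟩
    simp
  rw [← Fintype.sum_prod_type', ← Equiv.sum_comp hσ.toPerm]
  simp [Fintype.sum_prod_type]

section Weights

variable {S : Type*} [Fintype S] [DecidableEq S] {p : S → S → ℝ} {R : Finset S}

theorem forestWt_nonneg (hp : ∀ a b, 0 ≤ p a b) (R : Finset S) (f : S → S) :
    0 ≤ forestWt p R f :=
  Finset.prod_nonneg fun _ _ => hp _ _

theorem wroot_nonneg (hp : ∀ a b, 0 ≤ p a b) (A : Finset S) (i j : S) : 0 ≤ wroot p A i j :=
  Finset.sum_nonneg fun _ _ => by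
    split_ifs
    exacts [forestWt_nonneg hp _ _, le_rfl]

theorem forestWt_eq_update_mul {a : S} (ha : a ∉ R) (h : S → S) :
    forestWt p R h = forestWt p (insert a R) (Function.update h a a) * p a (h a) := by
  rw [forestWt, forestWt, Finset.compl_insert,
    ← Finset.prod_erase_mul _ _ (Finset.mem_compl.2 ha)]
  congr 1
  refine Finset.prod_congr rfl fun x hx => ?_
  rw [Function.update_of_ne (Finset.ne_of_mem_erase hx)]

open Classical in
theorem wroot_insert_self_eq (hrow : ∀ a, ∑ b, p a b = 1) {i j : S} (hj : j ∉ R) :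
    wroot p (insert j R) i j = ∑ h, if InTreeOf R j i h then forestWt p R h else 0 := by
  calc wroot p (insert j R) i j
      = ∑ f, ∑ m, if f j = j then (if IsForest (insert j R) f ∧ ∃ n, f^[n] i = j then
          forestWt p (insert j R) f * p j m else 0) else 0 := by
        refine Finset.sum_congr rfl fun f _ => ?_
        by_cases hf : IsForest (insert j R) f ∧ ∃ n, f^[n] i = j
        · simp [hf, hf.1.1 j (Finset.mem_insert_self j R), ← Finset.mul_sum, hrow]
        · simp [hf]
    _ = ∑ h, if IsForest (insert j R) (Function.update h j j) ∧
          ∃ n, (Function.update h j j)^[n] i = j then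
          forestWt p (insert j R) (Function.update h j j) * p j (h j) else 0 :=
        (Fintype.sum_update_apply j j _).symm
    _ = _ := by simp_rw [isForest_update_and_reaches_iff hj, ← forestWt_eq_update_mul hj]

open Classical in
theorem sum_inTreeOf_apply_eq {i j k : S} (hk : k ∉ R) :
    ∑ h, (if h k = j ∧ InTreeOf R k i h then forestWt p R h else 0) =
      wroot p (insert k R) i k * p k j := by
  calc ∑ h, (if h k = j ∧ InTreeOf R k i h then forestWt p R h else 0)
      = ∑ h, if h k = j ∧ IsForest (insert k R) (Function.update h k k) ∧
          ∃ n, (Function.update h k k)^[n] i = k then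
          forestWt p (insert k R) (Function.update h k k) * p k (h k) else 0 := by
        simp_rw [isForest_update_and_reaches_iff hk, ← forestWt_eq_update_mul hk]
    _ = ∑ f, ∑ m, if f k = k then (if m = j ∧ IsForest (insert k R) f ∧ ∃ n, f^[n] i = k then
          forestWt p (insert k R) f * p k m else 0) else 0 :=
        Fintype.sum_update_apply k k (fun f m => if m = j ∧ IsForest (insert k R) f ∧
          ∃ n, f^[n] i = k then forestWt p (insert k R) f * p k m else 0)
    _ = _ := by
        rw [wroot, Finset.sum_mul]
        refine Finset.sum_congr rfl fun f _ => ?_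
        by_cases hf : IsForest (insert k R) f ∧ ∃ n, f^[n] i = k
        · simp [hf, hf.1.1 k (Finset.mem_insert_self k R)]
        · simp [hf]

open Classical in
theorem wroot_insert_self_eq_add_sum (hrow : ∀ a, ∑ b, p a b = 1) {i j : S} (hj : j ∉ R) :
    wroot p (insert j R) i j =
      (if i = j then w p R else 0) + ∑ k ∈ Rᶜ, wroot p (insert k R) i k * p k j := by
  simp_rw [wroot_insert_self_eq hrow hj, ite_inTreeOf_eq_add hj, Finset.sum_add_distrib]
  rw [Finset.sum_comm]
  congr 1
  · simp only [ite_and, w, Finset.sum_ite_irrel, Finset.sum_const_zero]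
  · exact Finset.sum_congr rfl fun k hk => sum_inTreeOf_apply_eq (Finset.mem_compl.1 hk)

end Weights

section Neumann

variable {n R : Type*} [Fintype n] [DecidableEq n]

theorem Matrix.eq_vecMul_sum_pow_add [Semiring R] {Q : Matrix n n R} {a v : n → R}
    (h : v = a + v ᵥ* Q) (M : ℕ) :
    v = a ᵥ* ∑ k ∈ Finset.range M, Q ^ k + v ᵥ* Q ^ M := by
  induction M with
  | zero => simp
  | succ M ih =>
    calc v = a ᵥ* ∑ k ∈ Finset.range M, Q ^ k + (a + v ᵥ* Q) ᵥ* Q ^ M := by rw [← h]; exact ih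
      _ = _ := by
        rw [Matrix.add_vecMul, Matrix.vecMul_vecMul, ← pow_succ', Finset.sum_range_succ,
          Matrix.vecMul_add, add_assoc]

theorem Matrix.apply_eq_mul_sum_pow_add [CommSemiring R] {Q : Matrix n n R} {v : n → R} {i : n}
    {c : R} (h : v = Pi.single i c + v ᵥ* Q) (M : ℕ) (j : n) :
    v j = c * ∑ k ∈ Finset.range M, (Q ^ k) i j + (v ᵥ* Q ^ M) j := by
  conv_lhs => rw [Matrix.eq_vecMul_sum_pow_add h M]
  simp [Matrix.single_vecMul, Matrix.sum_apply]

theorem Matrix.summable_pow_apply_of_eq_single_add_vecMul {Q : Matrix n n ℝ}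
    (hQ : ∀ a b, 0 ≤ Q a b) {v : n → ℝ} (hv : 0 ≤ v) {i : n} {c : ℝ} (hc : 0 < c)
    (h : v = Pi.single i c + v ᵥ* Q) (j : n) : Summable fun k => (Q ^ k) i j := by
  refine summable_of_sum_range_le (fun k => Matrix.pow_apply_nonneg hQ k i j)
    fun M => (?_ : _ ≤ v j / c)
  rw [le_div_iff₀' hc]
  have htail : 0 ≤ (v ᵥ* Q ^ M) j :=
    Finset.sum_nonneg fun z _ => mul_nonneg (hv z) (Matrix.pow_apply_nonneg hQ M z j)
  linarith [Matrix.apply_eq_mul_sum_pow_add h M j]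

theorem Matrix.apply_eq_mul_tsum_pow {Q : Matrix n n ℝ} {v : n → ℝ} {i j : n} {c : ℝ}
    (h : v = Pi.single i c + v ᵥ* Q) (hsum : Summable fun k => (Q ^ k) i j)
    (htail : Tendsto (fun M => (v ᵥ* Q ^ M) j) atTop (𝓝 0)) :
    v j = c * ∑' k, (Q ^ k) i j := by
  have hlim := (hsum.hasSum.tendsto_sum_nat.const_mul c).add htail
  simp_rw [← Matrix.apply_eq_mul_sum_pow_add h, add_zero] at hlim
  exact tendsto_nhds_unique tendsto_const_nhds hlim

end Neumann

section Taboo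

variable {S : Type*} [DecidableEq S] {p : S → S → ℝ} {R : Finset S}

def taboo (p : S → S → ℝ) (R : Finset S) : S → S → ℝ :=
  fun a b => if b ∈ R then 0 else p a b

theorem taboo_nonneg (hp : ∀ a b, 0 ≤ p a b) (a b : S) : 0 ≤ taboo p R a b := by
  rw [taboo]
  split_ifs
  exacts [le_rfl, hp a b]

variable [Fintype S]

noncomputable def wrootVec (p : S → S → ℝ) (R : Finset S) (i : S) : S → ℝ :=
  fun k => if k ∈ R then 0 else wroot p (insert k R) i k

theorem wrootVec_nonneg (hp : ∀ a b, 0 ≤ p a b) (i : S) : 0 ≤ wrootVec p R i := fun k => by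
  unfold wrootVec
  split_ifs
  exacts [le_rfl, wroot_nonneg hp _ _ _]

theorem wrootVec_eq_single_add_vecMul (hrow : ∀ a, ∑ b, p a b = 1) {i : S} (hi : i ∉ R) :
    wrootVec p R i = Pi.single i (w p R) + wrootVec p R i ᵥ* Matrix.of (taboo p R) := by
  ext y
  simp only [Pi.add_apply, Matrix.vecMul, dotProduct, wrootVec, taboo, Matrix.of_apply]
  by_cases hy : y ∈ R
  · simp [hy, ne_of_mem_of_not_mem hy hi]
  · rw [if_neg hy, wroot_insert_self_eq_add_sum hrow hy, Pi.single_apply]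
    simp [hy, eq_comm, ite_mul, Finset.sum_ite, Finset.filter_not, Finset.compl_eq_univ_sdiff]

theorem summable_taboo_pow_apply (hs : IsStochastic p) (hw : 0 < w p R) {x : S} (hx : x ∉ R)
    (y : S) : Summable fun n => (Matrix.of (taboo p R) ^ n) x y :=
  Matrix.summable_pow_apply_of_eq_single_add_vecMul (taboo_nonneg hs.1) (wrootVec_nonneg hs.1 x)
    hw (wrootVec_eq_single_add_vecMul hs.2 hx) y

theorem tendsto_wrootVec_vecMul_taboo_pow (hs : IsStochastic p) (hw : 0 < w p R) (i j : S) :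
    Tendsto (fun M => (wrootVec p R i ᵥ* Matrix.of (taboo p R) ^ M) j) atTop (𝓝 0) := by
  simp only [Matrix.vecMul, dotProduct]
  rw [← Finset.sum_const_zero (s := (Finset.univ : Finset S))]
  refine tendsto_finsetSum _ fun z _ => ?_
  by_cases hz : z ∈ R
  · simp [wrootVec, hz]
  · simpa using ((summable_taboo_pow_apply hs hw hz j).tendsto_atTop_zero).const_mul
      (wrootVec p R i z)

end Taboo

section Paths

variable {S : Type*} {p : S → S → ℝ}

theorem wt_nonneg (hp : ∀ a b, 0 ≤ p a b) (x : S) (l : List S) : 0 ≤ wt p x l := by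
  induction l generalizing x with
  | nil => exact zero_le_one
  | cons y l ih => exact mul_nonneg (hp x y) (ih y)

variable [DecidableEq S] {R : Finset S}

open Classical in
theorem wt_taboo (x : S) (l : List S) :
    wt (taboo p R) x l = if ∀ y ∈ l, y ∉ R then wt p x l else 0 := by
  induction l generalizing x with
  | nil => simp [wt]
  | cons y l ih =>
    rw [wt, ih]
    simp only [wt, taboo]
    by_cases hy : y ∈ R <;> simp [hy, mul_ite]

variable [Fintype S]

theorem sum_wt_ofFn_eq_pow_apply (q : S → S → ℝ) (n : ℕ) (x j : S) :
    ∑ v : Fin n → S, (if (List.ofFn v).getLastD x = j then wt q x (List.ofFn v) else 0) =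
      (Matrix.of q ^ n) x j := by
  induction n generalizing x with
  | zero => simp [wt, Matrix.one_apply]
  | succ n ih =>
    rw [← (Fin.consEquiv fun _ => S).sum_comp, Fintype.sum_prod_type, pow_succ', Matrix.mul_apply]
    refine Finset.sum_congr rfl fun y _ => ?_
    have hcons : ∀ v : Fin n → S, (Fin.consEquiv fun _ => S) (y, v) = Fin.cons y v := fun _ => rfl
    simp only [hcons, List.ofFn_cons, List.getLastD_cons, wt, ← ih, Finset.mul_sum, mul_ite,
      mul_zero, Matrix.of_apply]

open Classical in
theorem green_eq_tsum_taboo_pow (hp : ∀ a b, 0 ≤ p a b) {i j : S}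
    (hsum : Summable fun n => (Matrix.of (taboo p R) ^ n) i j) :
    green p R i j = ∑' n, (Matrix.of (taboo p R) ^ n) i j := by
  set g : List S → ℝ := fun l => if l.getLastD i = j then wt (taboo p R) i l else 0
  have hg : green p R i j = ∑' l, g l := by
    refine (tsum_subtype {l : List S | _} (wt p i)).trans (tsum_congr fun l => ?_)
    simp only [g, Set.indicator_apply, Set.mem_ofPred_eq, List.getLast_eq_getLastD, wt_taboo]
    split_ifs <;> tauto
  have hfib : ∀ n, ∑' v : Fin n → S, g (List.ofFn v) = (Matrix.of (taboo p R) ^ n) i j :=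
    fun n => by rw [tsum_fintype, sum_wt_ofFn_eq_pow_apply]
  have hg0 : ∀ l, 0 ≤ g l := fun l => by
    simp only [g]
    split_ifs
    exacts [wt_nonneg (taboo_nonneg hp) _ _, le_rfl]
  have hsig : Summable fun q : Σ n, Fin n → S => g (List.ofFn q.2) :=
    (summable_sigma_of_nonneg fun q => hg0 _).2
      ⟨fun n => (hasSum_fintype _).summable, by simpa only [hfib] using hsum⟩
  rw [hg, ← List.equivSigmaTuple.symm.tsum_eq]
  exact hsig.tsum_sigma.trans (tsum_congr hfib)

end Paths

/-- Green tree formula: `E_i[∑_{n<T_R} 1(X_n = j)] = w_{ij}(R ∪ {j}) / w(R)`. -/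
theorem green_tree_formula {S : Type*} [Fintype S] [DecidableEq S]
    (p : S → S → ℝ) (hs : IsStochastic p) (R : Finset S) (hw : 0 < w p R)
    (i j : S) (hi : i ∉ R) (hj : j ∉ R) :
    green p R i j = wroot p (insert j R) i j / w p R := by
  have hsum := summable_taboo_pow_apply hs hw hi j
  have hv := Matrix.apply_eq_mul_tsum_pow (wrootVec_eq_single_add_vecMul hs.2 hi) hsum
    (tendsto_wrootVec_vecMul_taboo_pow hs hw i j)
  have hvj : wrootVec p R i j = wroot p (insert j R) i j := if_neg hj
  rw [green_eq_tsum_taboo_pow hs.1 hsum, eq_div_iff hw.ne', ← hvj, hv, mul_comm]
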